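/- Let G be a reduced abelian p-group, t the torsion ideal of End(G), and σ a t-admissible indicator with finite entries. Then the set I = {f ∈ t(σ) : the image G f has finite rank} is a two-sided ideal of t. -/

import Mathlib

/-!
Both defining conditions of the ideal are stable under subtraction and under composition with
an arbitrary endomorphism on either side. The height conditions `p ^ i • f = p ^ k • g` survive
because composition commutes with multiplication by `p ^ i`; finiteness of the image survives
because `G (f - g) ⊆ G f - G g`, while the image of `h * f` is `h (G f)` and that of `f * h`
lies in `G f`.
-/

/-- The torsion ideal `t` of `End G`, as a set. -/
def tset (p : ℕ) (G : Type*) [AddCommGroup G] : Set (AddMonoid.End G) :=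
  {f | ∃ n : ℕ, p ^ n • f = 0}

/-- An indicator with finite entries: a strictly increasing sequence of
natural numbers, possibly ending in a tail of `∞`'s. -/
def IsFinIndicator (σ : ℕ → ℕ∞) : Prop :=
  (∀ i, σ i ≠ ⊤ → σ i < σ (i + 1)) ∧ (∀ i, σ i = ⊤ → σ (i + 1) = ⊤)

/-- `σ` is `t`-admissible: at every gap (`σ i + 1 < σ (i+1) < ∞`) with
`σ i = k`, the `k`-th Ulm invariant of the `p`-group `t` is nonzero, i.e.
there is `f ∈ p^k t` of order `p` with `f ∉ p^(k+1) t`. -/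
def TAdmissible (p : ℕ) (G : Type*) [AddCommGroup G] (σ : ℕ → ℕ∞) : Prop :=
  ∀ i : ℕ, ∀ k : ℕ, σ i = (k : ℕ∞) →
    ((k : ℕ∞) + 1 < σ (i + 1)) → σ (i + 1) ≠ ⊤ →
    ∃ f ∈ tset p G, (∃ g ∈ tset p G, f = p ^ k • g) ∧ p • f = 0 ∧
      ¬∃ g ∈ tset p G, f = p ^ (k + 1) • g

/-- Membership in `t(σ) = {f ∈ t : ind(f) ≥ σ}`, heights computed in the
`p`-group `t`. -/
def memTsigma (p : ℕ) (G : Type*) [AddCommGroup G] (σ : ℕ → ℕ∞)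
    (f : AddMonoid.End G) : Prop :=
  f ∈ tset p G ∧ ∀ i : ℕ,
    (σ i = ⊤ → p ^ i • f = 0) ∧
    ∀ k : ℕ, σ i = (k : ℕ∞) → ∃ g ∈ tset p G, p ^ i • f = p ^ k • g

section

variable {p : ℕ} {G : Type*} [AddCommGroup G] {f g : AddMonoid.End G}

lemma sub_mem_tset (hf : f ∈ tset p G) (hg : g ∈ tset p G) : f - g ∈ tset p G := by
  obtain ⟨n, hn⟩ := hf
  obtain ⟨m, hm⟩ := hg
  refine ⟨n + m, ?_⟩
  rw [nsmul_sub, pow_add, mul_smul, mul_smul, hm, smul_comm (p ^ n) (p ^ m) f, hn, nsmul_zero,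
    nsmul_zero, sub_zero]

lemma mul_mem_tset_left (h : AddMonoid.End G) (hf : f ∈ tset p G) : h * f ∈ tset p G := by
  obtain ⟨n, hn⟩ := hf
  exact ⟨n, by rw [← mul_smul_comm, hn, mul_zero]⟩

lemma mul_mem_tset_right (h : AddMonoid.End G) (hf : f ∈ tset p G) : f * h ∈ tset p G := by
  obtain ⟨n, hn⟩ := hf
  exact ⟨n, by rw [← smul_mul_assoc, hn, zero_mul]⟩

namespace memTsigma

variable {σ : ℕ → ℕ∞}

lemma sub (hf : memTsigma p G σ f) (hg : memTsigma p G σ g) : memTsigma p G σ (f - g) := by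
  refine ⟨sub_mem_tset hf.1 hg.1, fun i => ⟨fun htop => ?_, fun k hk => ?_⟩⟩
  · rw [nsmul_sub, (hf.2 i).1 htop, (hg.2 i).1 htop, sub_zero]
  · obtain ⟨f', hf't, hf'⟩ := (hf.2 i).2 k hk
    obtain ⟨g', hg't, hg'⟩ := (hg.2 i).2 k hk
    exact ⟨f' - g', sub_mem_tset hf't hg't, by rw [nsmul_sub, hf', hg', nsmul_sub]⟩

lemma mul_left (h : AddMonoid.End G) (hf : memTsigma p G σ f) : memTsigma p G σ (h * f) := by
  refine ⟨mul_mem_tset_left h hf.1, fun i => ⟨fun htop => ?_, fun k hk => ?_⟩⟩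
  · rw [← mul_smul_comm, (hf.2 i).1 htop, mul_zero]
  · obtain ⟨f', hf't, hf'⟩ := (hf.2 i).2 k hk
    exact ⟨h * f', mul_mem_tset_left h hf't, by rw [← mul_smul_comm, hf', mul_smul_comm]⟩

lemma mul_right (h : AddMonoid.End G) (hf : memTsigma p G σ f) : memTsigma p G σ (f * h) := by
  refine ⟨mul_mem_tset_right h hf.1, fun i => ⟨fun htop => ?_, fun k hk => ?_⟩⟩
  · rw [← smul_mul_assoc, (hf.2 i).1 htop, zero_mul]
  · obtain ⟨f', hf't, hf'⟩ := (hf.2 i).2 k hk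
    exact ⟨f' * h, mul_mem_tset_right h hf't, by rw [← smul_mul_assoc, hf', smul_mul_assoc]⟩

end memTsigma

open Pointwise in
lemma finite_range_sub (hf : (Set.range f).Finite) (hg : (Set.range g).Finite) :
    (Set.range (f - g)).Finite :=
  (hf.sub hg).subset <| by
    rintro _ ⟨x, rfl⟩
    exact Set.sub_mem_sub ⟨x, rfl⟩ ⟨x, rfl⟩

lemma finite_range_mul_left (h : AddMonoid.End G) (hf : (Set.range f).Finite) :
    (Set.range (h * f)).Finite := by
  rw [AddMonoid.End.coe_mul, Set.range_comp]
  exact hf.image h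

lemma finite_range_mul_right (h : AddMonoid.End G) (hf : (Set.range f).Finite) :
    (Set.range (f * h)).Finite := by
  rw [AddMonoid.End.coe_mul]
  exact hf.subset (Set.range_comp_subset_range h f)

end

theorem stmt17_general (p : ℕ) (G : Type*) [AddCommGroup G]
    (σ : ℕ → ℕ∞) :
    (∀ f g : AddMonoid.End G,
      (memTsigma p G σ f ∧ (Set.range f).Finite) →
      (memTsigma p G σ g ∧ (Set.range g).Finite) →
      memTsigma p G σ (f - g) ∧ (Set.range (f - g)).Finite) ∧
    (∀ f : AddMonoid.End G, (memTsigma p G σ f ∧ (Set.range f).Finite) →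
      ∀ h ∈ tset p G,
        (memTsigma p G σ (h * f) ∧ (Set.range (h * f)).Finite) ∧
        (memTsigma p G σ (f * h) ∧ (Set.range (f * h)).Finite)) :=
  ⟨fun _ _ ⟨hf, hfin⟩ ⟨hg, hgfin⟩ => ⟨hf.sub hg, finite_range_sub hfin hgfin⟩,
    fun _ ⟨hf, hfin⟩ h _ =>
      ⟨⟨hf.mul_left h, finite_range_mul_left h hfin⟩,
        ⟨hf.mul_right h, finite_range_mul_right h hfin⟩⟩⟩

/-- For a `t`-admissible indicator `σ` with finite entries, the set of
`f ∈ t(σ)` whose image `G f` has finite rank (equivalently, is finite) is a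
two-sided ideal of `t`. -/
theorem stmt17 (p : ℕ) (hp : p.Prime) (G : Type*) [AddCommGroup G]
    (hpG : ∀ a : G, ∃ n : ℕ, p ^ n • a = 0)
    (hred : ∀ H : AddSubgroup G,
      (∀ x ∈ H, ∀ n : ℕ, ∃ y ∈ H, x = p ^ n • y) → H = ⊥)
    (hunb : ∀ n : ℕ, ∃ a : G, p ^ n • a ≠ 0)
    (σ : ℕ → ℕ∞) (hσ : IsFinIndicator σ) (hσa : TAdmissible p G σ) :
    (∀ f g : AddMonoid.End G,
      (memTsigma p G σ f ∧ (Set.range f).Finite) →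
      (memTsigma p G σ g ∧ (Set.range g).Finite) →
      memTsigma p G σ (f - g) ∧ (Set.range (f - g)).Finite) ∧
    (∀ f : AddMonoid.End G, (memTsigma p G σ f ∧ (Set.range f).Finite) →
      ∀ h ∈ tset p G,
        (memTsigma p G σ (h * f) ∧ (Set.range (h * f)).Finite) ∧
        (memTsigma p G σ (f * h) ∧ (Set.range (f * h)).Finite)) :=
  stmt17_general p G σ
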